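/- The averaging operator A, defined by (AF)(xy,t) = (1/m⁰(x))·Σ_{u:u∼x} c(xu)·∫₀^{1−t} F(xu,s) ds + (1/m⁰(y))·Σ_{v:v∼y} c(yv)·∫₀^{t} F(yv,s) ds, is a bounded self-adjoint operator on the Hilbert space L²(X¹,m¹). -/

import Mathlib

open MeasureTheory Set ENNReal

set_option linter.unusedSectionVars false

noncomputable section

/-- A weighted network: countable connected graph without loops or multiple edges,
equipped with positive conductances `c` satisfying `m⁰(x) = ∑_{y∼x} c(xy) < ∞`. -/
structure Network (V : Type) : Type where
  adj : V → V → Prop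
  adj_symm : ∀ x y, adj x y → adj y x
  adj_irrefl : ∀ x, ¬ adj x x
  adj_connected : ∀ x y, Relation.ReflTransGen adj x y
  c : V → V → ℝ
  c_symm : ∀ x y, c x y = c y x
  c_pos : ∀ x y, adj x y → 0 < c x y
  c_eq_zero : ∀ x y, ¬ adj x y → c x y = 0
  c_summable : ∀ x, Summable fun y => c x y

namespace Network

variable {V : Type} [Countable V] [MeasurableSpace V] [DiscreteMeasurableSpace V]

/-- The vertex weight `m⁰(x) = ∑_{y : y ∼ x} c(xy)`. -/
def m0 (N : Network V) (x : V) : ℝ := ∑' y, N.c x y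

/-- The measure `m¹` on the metric graph `X¹`.  A point `((x,y),t)` represents the point
at distance `t ∈ (0,1)` from `x` on the edge `[x,y]`; each edge appears with both
orientations, whence the factor `1/2`. -/
def edgeMeasure (N : Network V) : Measure ((V × V) × ℝ) :=
  Measure.sum fun e : V × V =>
    Measure.map (fun t => (e, t))
      ((ENNReal.ofReal (N.c e.1 e.2 / 2)) • (volume.restrict (Set.Ioo (0:ℝ) 1)))

/-- The identification `(xy,t) ≡ (yx,1-t)` of the two orientations of an edge. -/
def eFlip : (V × V) × ℝ → (V × V) × ℝ := fun p => ((p.1.2, p.1.1), 1 - p.2)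

theorem measurable_eFlip : Measurable (eFlip (V := V)) := by
  apply Measurable.prod
  · exact ((measurable_snd.comp measurable_fst).prodMk (measurable_fst.comp measurable_fst))
  · exact measurable_const.sub measurable_snd

theorem measurePreserving_eFlip (N : Network V) :
    MeasurePreserving (eFlip (V := V)) N.edgeMeasure N.edgeMeasure := by
  refine ⟨measurable_eFlip, ?_⟩
  ext s hs
  rw [Measure.map_apply measurable_eFlip hs, edgeMeasure,
    Measure.sum_apply _ (measurable_eFlip hs), Measure.sum_apply _ hs]
  have key : ∀ e : V × V,
      (Measure.map (fun t => (e, t))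
        ((ENNReal.ofReal (N.c e.1 e.2 / 2)) • (volume.restrict (Set.Ioo (0:ℝ) 1))))
          (eFlip ⁻¹' s)
      = (Measure.map (fun t => ((e.2, e.1), t))
        ((ENNReal.ofReal (N.c e.2 e.1 / 2)) • (volume.restrict (Set.Ioo (0:ℝ) 1)))) s := by
    intro e
    have hme : Measurable fun t : ℝ => (e, t) := measurable_prodMk_left
    have hme' : Measurable fun t : ℝ => ((e.2, e.1), t) := measurable_prodMk_left
    rw [Measure.map_apply hme (measurable_eFlip hs), Measure.map_apply hme' hs,
      Measure.smul_apply, Measure.smul_apply, N.c_symm e.1 e.2]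
    congr 1
    have hpre : ((fun t : ℝ => (e, t)) ⁻¹' (eFlip ⁻¹' s))
        = (fun t : ℝ => 1 - t) ⁻¹' ((fun t : ℝ => ((e.2, e.1), t)) ⁻¹' s) := by
      ext t; simp [eFlip]
    rw [hpre]
    have hmp : MeasurePreserving (fun t : ℝ => 1 - t)
        (volume.restrict (Set.Ioo (0:ℝ) 1)) (volume.restrict (Set.Ioo (0:ℝ) 1)) := by
      have h0 : MeasurePreserving (fun t : ℝ => 1 - t) volume volume :=
        Measure.measurePreserving_sub_left volume 1
      have h1 := h0.restrict_preimage (s := Set.Ioo (0:ℝ) 1) measurableSet_Ioo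
      have h2 : (fun t : ℝ => 1 - t) ⁻¹' (Set.Ioo (0:ℝ) 1) = Set.Ioo (0:ℝ) 1 := by
        ext t; constructor <;> (intro ht; simp only [Set.mem_preimage, Set.mem_Ioo] at *; constructor <;> linarith [ht.1, ht.2])
      rwa [h2] at h1
    exact (hmp.measure_preimage ((hme' hs).nullMeasurableSet)).symm ▸ rfl
  calc
    (∑' e : V × V,
        (Measure.map (fun t => (e, t))
          ((ENNReal.ofReal (N.c e.1 e.2 / 2)) • (volume.restrict (Set.Ioo (0:ℝ) 1))))
            (eFlip ⁻¹' s))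
        = ∑' e : V × V,
          (Measure.map (fun t => ((e.2, e.1), t))
            ((ENNReal.ofReal (N.c e.2 e.1 / 2)) • (volume.restrict (Set.Ioo (0:ℝ) 1)))) s :=
      tsum_congr key
    _ = ∑' e : V × V,
          (Measure.map (fun t => (e, t))
            ((ENNReal.ofReal (N.c e.1 e.2 / 2)) • (volume.restrict (Set.Ioo (0:ℝ) 1)))) s :=
      (Equiv.prodComm V V).tsum_eq fun e =>
        (Measure.map (fun t => (e, t))
          ((ENNReal.ofReal (N.c e.1 e.2 / 2)) • (volume.restrict (Set.Ioo (0:ℝ) 1)))) s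

/-- The continuous linear map `F ↦ F ∘ σ` induced by the edge-orientation flip. -/
def flipOp (N : Network V) : Lp ℂ 2 N.edgeMeasure →L[ℂ] Lp ℂ 2 N.edgeMeasure :=
  (Lp.compMeasurePreservingₗᵢ (E := ℂ) (p := 2) ℂ (eFlip (V := V))
    N.measurePreserving_eFlip).toContinuousLinearMap

/-- The Hilbert space `L²(X¹, m¹)` of square-integrable functions on the metric graph,
realized as the subspace of `L²` functions on oriented edges which are compatible with
the identification `(xy,t) ≡ (yx, 1-t)`. -/
def L2X (N : Network V) : Submodule ℂ (Lp ℂ 2 N.edgeMeasure) :=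
  LinearMap.ker ((N.flipOp - ContinuousLinearMap.id ℂ (Lp ℂ 2 N.edgeMeasure)) :
    Lp ℂ 2 N.edgeMeasure →ₗ[ℂ] Lp ℂ 2 N.edgeMeasure)

theorem isClosed_L2X (N : Network V) : IsClosed (N.L2X : Set (Lp ℂ 2 N.edgeMeasure)) :=
  ContinuousLinearMap.isClosed_ker (N.flipOp - ContinuousLinearMap.id ℂ (Lp ℂ 2 N.edgeMeasure))

instance (N : Network V) : CompleteSpace N.L2X :=
  (isClosed_L2X N).completeSpace_coe

end Network

namespace Network

variable {V : Type} [Countable V] [MeasurableSpace V] [DiscreteMeasurableSpace V]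

/-- The value of (a representative of) `F ∈ L²(X¹,m¹)` at the point of the edge `[x,y]`
at distance `t` from `x`. -/
def edgeFun (N : Network V) (F : Lp ℂ 2 N.edgeMeasure) (x y : V) (t : ℝ) : ℂ :=
  F ((x, y), t)

/-- The counting measure on vertices weighted by `m⁰`; `ℓ²(X⁰,m⁰) = Lp ℂ 2 N.vertexMeasure`. -/
def vertexMeasure (N : Network V) : Measure V :=
  Measure.sum fun x => (ENNReal.ofReal (N.m0 x)) • Measure.dirac x

/-- The averaging operator, at the level of functions. -/
def avgFun (N : Network V) (f : V → V → ℝ → ℂ) (x y : V) (t : ℝ) : ℂ :=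
  (N.m0 x : ℂ)⁻¹ * (∑' u, (N.c x u : ℂ) * (∫ s in (0:ℝ)..(1 - t), f x u s))
    + (N.m0 y : ℂ)⁻¹ * (∑' v, (N.c y v : ℂ) * (∫ s in (0:ℝ)..t, f y v s))

/-- `f, g, h` are (continuous versions of) an element of `Ĥ²(X¹,m¹)` together with its first
and second edgewise derivatives: on each edge, `g` is the derivative of `f` and `h` the
derivative of `g` (in the sense of absolutely continuous functions, via the fundamental
theorem of calculus), and `f`, `g`, `h` are square-integrable on the metric graph. -/
structure IsH2Rep (N : Network V) (f g h : V → V → ℝ → ℂ) : Prop where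
  ftc₁ : ∀ x y, N.adj x y → ∀ t ∈ Set.Icc (0:ℝ) 1,
    f x y t = f x y 0 + ∫ s in (0:ℝ)..t, g x y s
  ftc₂ : ∀ x y, N.adj x y → ∀ t ∈ Set.Icc (0:ℝ) 1,
    g x y t = g x y 0 + ∫ s in (0:ℝ)..t, h x y s
  intervalIntegrable_g : ∀ x y, N.adj x y → IntervalIntegrable (g x y) volume 0 1
  intervalIntegrable_h : ∀ x y, N.adj x y → IntervalIntegrable (h x y) volume 0 1
  memL2_f : MemLp (fun p : (V × V) × ℝ => f p.1.1 p.1.2 p.2) 2 N.edgeMeasure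
  memL2_g : MemLp (fun p : (V × V) × ℝ => g p.1.1 p.1.2 p.2) 2 N.edgeMeasure
  memL2_h : MemLp (fun p : (V × V) × ℝ => h p.1.1 p.1.2 p.2) 2 N.edgeMeasure

/-- The graph of the operator `S = -d²/dt²` with domain the functions in `Ĥ²(X¹,m¹)` which are
continuous at the vertices: `(F, G) ∈ graph S` iff `F` has an edgewise `H²` representative
`f` (with derivatives `g`, `h`), `f` is continuous at each vertex, and `G = -f''`. -/
def SGraph (N : Network V) (F G : N.L2X) : Prop :=
  ∃ f g h : V → V → ℝ → ℂ, N.IsH2Rep f g h ∧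
    (⇑(F : Lp ℂ 2 N.edgeMeasure) =ᵐ[N.edgeMeasure] fun p => f p.1.1 p.1.2 p.2) ∧
    (∀ x u v, N.adj x u → N.adj x v → f x u 0 = f x v 0) ∧
    (⇑(G : Lp ℂ 2 N.edgeMeasure) =ᵐ[N.edgeMeasure] fun p => -(h p.1.1 p.1.2 p.2))

/-- The graph of the (Kirchhoff) Laplacian `L`: the restriction of `S` to the functions
satisfying moreover `F'(x) = ∑_{y∼x} c(xy) F'(xy,0+) = 0` at every vertex `x`. -/
def LGraph (N : Network V) (F G : N.L2X) : Prop :=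
  ∃ f g h : V → V → ℝ → ℂ, N.IsH2Rep f g h ∧
    (⇑(F : Lp ℂ 2 N.edgeMeasure) =ᵐ[N.edgeMeasure] fun p => f p.1.1 p.1.2 p.2) ∧
    (∀ x u v, N.adj x u → N.adj x v → f x u 0 = f x v 0) ∧
    (∀ x, Summable fun y => (N.c x y : ℂ) * g x y 0) ∧
    (∀ x, ∑' y, (N.c x y : ℂ) * g x y 0 = 0) ∧
    (⇑(G : Lp ℂ 2 N.edgeMeasure) =ᵐ[N.edgeMeasure] fun p => -(h p.1.1 p.1.2 p.2))

end Network

/-- The graph of the adjoint of a densely defined operator, described by its graph `T`: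
`(G,K) ∈ graph T*` iff `⟪G, SF⟫ = ⟪K, F⟫` for all `(F, SF) ∈ T`. -/
def adjointGraph {H : Type*} [NormedAddCommGroup H] [InnerProductSpace ℂ H]
    (T : Set (H × H)) : Set (H × H) :=
  {q | ∀ p ∈ T, (inner ℂ q.1 p.2 : ℂ) = inner ℂ q.2 p.1}

/-- A densely defined operator given by its graph `T` is self-adjoint if `T* = T`. -/
def IsSelfAdjointGraph {H : Type*} [NormedAddCommGroup H] [InnerProductSpace ℂ H]
    (T : Set (H × H)) : Prop :=
  Dense (Prod.fst '' T) ∧ adjointGraph T = T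

/-- The entire function `Φ(z,t) = t` for `z = 0` and `sin(zt)/z` otherwise. -/
def Phi (z : ℂ) (t : ℝ) : ℂ := if z = 0 then (t : ℂ) else Complex.sin (z * t) / z

namespace Network

variable {V : Type} [Countable V] [MeasurableSpace V] [DiscreteMeasurableSpace V]

/-- Iterated forward extension step for the d'Alembert extension: `fwdExt f n x y s`
represents `F̃(xy, s + n)` for `s ∈ (0,1]`. -/
def fwdExt (N : Network V) (f : V → V → ℝ → ℂ) : ℕ → V → V → ℝ → ℂ
  | 0 => f
  | (n+1) => fun x y s =>
      (2 / (N.m0 y) : ℂ) * ∑' v, (N.c y v : ℂ) * N.fwdExt f n y v s - N.fwdExt f n y x s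

/-- Iterated backward extension step for the d'Alembert extension: `bwdExt f n x y s`
represents `F̃(xy, s - n)` for `s ∈ [0,1)`. -/
def bwdExt (N : Network V) (f : V → V → ℝ → ℂ) : ℕ → V → V → ℝ → ℂ
  | 0 => f
  | (n+1) => fun x y s =>
      (2 / (N.m0 x) : ℂ) * ∑' u, (N.c x u : ℂ) * N.bwdExt f n u x s - N.bwdExt f n y x s

/-- The d'Alembert extension `F̃` of a function `F` on the metric graph: each edge component
`t ↦ F(xy,t)`, `t ∈ [0,1]`, is extended to the whole real line by the recursion
`F̃(xy,t) = (2/m⁰(y)) ∑_{v∼y} c(yv) F̃(yv,t-1) - F̃(yx,t-1)` for `t > 1` and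
`F̃(xy,t) = (2/m⁰(x)) ∑_{u∼x} c(ux) F̃(ux,t+1) - F̃(yx,t+1)` for `t < 0`. -/
def tilde (N : Network V) (f : V → V → ℝ → ℂ) (x y : V) (t : ℝ) : ℂ :=
  if 0 ≤ t ∧ t ≤ 1 then f x y t
  else if 1 < t then N.fwdExt f (⌈t⌉ - 1).toNat x y (t - ((⌈t⌉ - 1 : ℤ) : ℝ))
  else N.bwdExt f (-⌊t⌋).toNat x y (t + ((-⌊t⌋ : ℤ) : ℝ))

/-- The d'Alembert operator `C(τ)` at the level of functions. -/
def dAlembertFun (N : Network V) (f : V → V → ℝ → ℂ) (τ : ℝ) (x y : V) (t : ℝ) : ℂ :=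
  (N.tilde f x y (t + τ) + N.tilde f x y (t - τ)) / 2

/-- The squared norm `‖g‖²_{L²(X¹,m¹)} = (1/2) ∑_x ∑_{y} c(xy) ∫₀¹ |g(xy,t)|² dt`
(with values in `ℝ≥0∞`). -/
def normSq (N : Network V) (g : V → V → ℝ → ℂ) : ℝ≥0∞ :=
  (1/2 : ℝ≥0∞) * ∑' x, ∑' y, ENNReal.ofReal (N.c x y) *
    ∫⁻ t in Set.Ioo (0:ℝ) 1, ((‖g x y t‖₊ : ℝ≥0∞) ^ 2)

end Network

/-!
Write `A = B + σBσ`, where `σF(xy,t) = F(yx,1-t)` is the orientation flip and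
`(BF)(xy,t) = m⁰(x)⁻¹ ∑_u c(xu) ∫₀^{1-t} F(xu,s) ds` is the part of `A` coming from the star of
the initial vertex. On `L²` of the oriented edges, `B` is the integral operator with kernel
`k((xy,t),(x'u,s)) = 2 m⁰(x)⁻¹ [x' = x ∧ t + s < 1]`, which is symmetric and has row integrals
at most `1`. Such a kernel gives a contraction (Cauchy–Schwarz on each row, then Tonelli and
symmetry) and a self-adjoint operator (Fubini). Since `σ` is a self-adjoint involution,
`B + σBσ` is self-adjoint and commutes with `σ`, so it restricts to the `σ`-invariant subspace
`L²(X¹,m¹)`, where it is `A`.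
-/

open scoped NNReal

section Inequalities

variable {α : Type*} [MeasurableSpace α] {μ : Measure α}

theorem ENNReal.mul_le_sq_add_sq (a b : ℝ≥0∞) : a * b ≤ a ^ 2 + b ^ 2 := by
  rcases le_total a b with h | h
  · exact (mul_le_mul_left h b).trans (le_add_left (sq b).ge)
  · exact (mul_le_mul_right h a).trans (le_add_right (sq a).ge)

theorem sq_lintegral_mul_le {w f : α → ℝ≥0∞} (hw : AEMeasurable w μ) (hf : AEMeasurable f μ) :
    (∫⁻ a, w a * f a ∂μ) ^ 2 ≤ (∫⁻ a, w a ∂μ) * ∫⁻ a, w a * f a ^ 2 ∂μ := by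
  have holder := ENNReal.lintegral_mul_le_Lp_mul_Lq μ Real.HolderConjugate.two_two
    (hw.pow_const (1 / 2 : ℝ)) ((hw.pow_const (1 / 2 : ℝ)).mul hf)
  have hsqrt : ∀ x : ℝ≥0∞, x ^ (1 / 2 : ℝ) * x ^ (1 / 2 : ℝ) = x := fun x => by
    rw [← ENNReal.rpow_add_of_nonneg _ _ (by norm_num) (by norm_num)]; norm_num
  have hsq : ∀ x : ℝ≥0∞, (x ^ (1 / 2 : ℝ)) ^ (2 : ℝ) = x := fun x => by
    rw [← ENNReal.rpow_mul]; norm_num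
  simp only [Pi.mul_apply, ← mul_assoc, hsqrt, ENNReal.mul_rpow_of_nonneg _ _ zero_le_two, hsq,
    ENNReal.rpow_two] at holder
  calc (∫⁻ a, w a * f a ∂μ) ^ 2
      ≤ ((∫⁻ a, w a ∂μ) ^ (1 / 2 : ℝ) * (∫⁻ a, w a * f a ^ 2 ∂μ) ^ (1 / 2 : ℝ)) ^ 2 := by
        gcongr
  _ = (∫⁻ a, w a ∂μ) * ∫⁻ a, w a * f a ^ 2 ∂μ := by
        rw [mul_pow, ← ENNReal.rpow_two, ← ENNReal.rpow_two, hsq, hsq]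

variable {E : Type*} [NormedAddCommGroup E]

theorem eLpNorm_two_sq_eq_lintegral (f : α → E) :
    eLpNorm f 2 μ ^ 2 = ∫⁻ a, ‖f a‖ₑ ^ 2 ∂μ := by
  simpa using eLpNorm_nnreal_pow_eq_lintegral (f := f) (μ := μ) (p := 2) two_ne_zero

theorem Lp.lintegral_enorm_sq_lt_top (F : Lp E 2 μ) : ∫⁻ a, ‖F a‖ₑ ^ 2 ∂μ < ∞ := by
  rw [← eLpNorm_two_sq_eq_lintegral]
  exact ENNReal.pow_lt_top (Lp.eLpNorm_lt_top F)

theorem eLpNorm_two_le_of_lintegral_le {f g : α → E}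
    (h : ∫⁻ a, ‖f a‖ₑ ^ 2 ∂μ ≤ ∫⁻ a, ‖g a‖ₑ ^ 2 ∂μ) : eLpNorm f 2 μ ≤ eLpNorm g 2 μ := by
  rwa [← eLpNorm_two_sq_eq_lintegral, ← eLpNorm_two_sq_eq_lintegral,
    ENNReal.pow_le_pow_left_iff two_ne_zero] at h

end Inequalities

open Classical in
theorem tsum_ite_fst_eq {α β M : Type*} [AddCommMonoid M] [TopologicalSpace M]
    (a : α) (g : β → M) : ∑' e : α × β, (if e.1 = a then g e.2 else 0) = ∑' b, g b := by
  rw [← (Prod.mk_right_injective a).tsum_eq]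
  · simp
  · intro e he
    obtain ⟨x, u⟩ := e
    have hx : x = a := by by_contra h; simp [h] at he
    exact ⟨u, by rw [hx]⟩

theorem RCLike.enorm_ofReal_nnreal {𝕜 : Type*} [RCLike 𝕜] (r : ℝ≥0) :
    ‖((r : ℝ) : 𝕜)‖ₑ = r := by
  simp [enorm_eq_nnnorm]

theorem IsSelfAdjoint.restrict {𝕜 E : Type*} [RCLike 𝕜] [NormedAddCommGroup E]
    [InnerProductSpace 𝕜 E] [CompleteSpace E] {T : E →L[𝕜] E} (hT : IsSelfAdjoint T)
    {U : Submodule 𝕜 E} [CompleteSpace U] (hU : ∀ x ∈ U, T x ∈ U) :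
    IsSelfAdjoint (T.restrict hU) :=
  LinearMap.IsSymmetric.isSelfAdjoint <| by
    rw [ContinuousLinearMap.toLinearMap_restrict]
    exact hT.isSymmetric.restrict_invariant hU

section SymmetricKernel

open Function ComplexConjugate

variable {α : Type*} [MeasurableSpace α] {𝕜 : Type*} [RCLike 𝕜] {μ : Measure α}
  {k : α → α → ℝ≥0}

structure IsSymmSubMarkovKernel (μ : Measure α) (k : α → α → ℝ≥0) : Prop where
  measurable : Measurable (uncurry k)
  symm : ∀ p q, k p q = k q p
  lintegral_le_one : ∀ p, ∫⁻ q, (k p q : ℝ≥0∞) ∂μ ≤ 1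

def kernelIntegral (μ : Measure α) (k : α → α → ℝ≥0) (f : α → 𝕜) (p : α) : 𝕜 :=
  ∫ q, ((k p q : ℝ) : 𝕜) * f q ∂μ

theorem kernelIntegral_smul_ae (c : 𝕜) (F : Lp 𝕜 2 μ) :
    kernelIntegral μ k ⇑(c • F) =ᵐ[μ] c • kernelIntegral μ k F :=
  Filter.Eventually.of_forall fun p => by
    rw [Pi.smul_apply, smul_eq_mul, kernelIntegral, kernelIntegral, ← integral_const_mul]
    refine integral_congr_ae ?_
    filter_upwards [Lp.coeFn_smul c F] with q hq
    rw [hq, Pi.smul_apply, smul_eq_mul, mul_left_comm]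

namespace IsSymmSubMarkovKernel

variable (hk : IsSymmSubMarkovKernel μ k)
include hk

theorem measurable_coe : Measurable fun z : α × α => (k z.1 z.2 : ℝ≥0∞) :=
  measurable_coe_nnreal_ennreal.comp hk.measurable

theorem measurable_coe_apply (p : α) : Measurable fun q => (k p q : ℝ≥0∞) :=
  hk.measurable_coe.comp measurable_prodMk_left

theorem stronglyMeasurable_mul {f : α → 𝕜} (hf : StronglyMeasurable f) :
    StronglyMeasurable fun z : α × α => ((k z.1 z.2 : ℝ) : 𝕜) * f z.2 :=
  ((RCLike.continuous_ofReal.measurable.comp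
    (measurable_coe_nnreal_real.comp hk.measurable)).stronglyMeasurable).mul
    (hf.comp_measurable measurable_snd)

variable [SFinite μ]

theorem lintegral_lintegral_mul_le {f : α → ℝ≥0∞} (hf : Measurable f) :
    ∫⁻ p, ∫⁻ q, k p q * f q ∂μ ∂μ ≤ ∫⁻ q, f q ∂μ := by
  rw [lintegral_lintegral_swap (hk.measurable_coe.mul (hf.comp measurable_snd)).aemeasurable]
  calc ∫⁻ q, ∫⁻ p, k p q * f q ∂μ ∂μ = ∫⁻ q, (∫⁻ p, (k q p : ℝ≥0∞) ∂μ) * f q ∂μ := by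
        refine lintegral_congr fun q => ?_
        simp_rw [hk.symm _ q]
        exact lintegral_mul_const _ (hk.measurable_coe_apply q)
  _ ≤ ∫⁻ q, f q ∂μ := lintegral_mono fun q => mul_le_of_le_one_left' (hk.lintegral_le_one q)

theorem lintegral_sq_lintegral_mul_le {f : α → ℝ≥0∞} (hf : Measurable f) :
    ∫⁻ p, (∫⁻ q, k p q * f q ∂μ) ^ 2 ∂μ ≤ ∫⁻ q, f q ^ 2 ∂μ :=
  calc ∫⁻ p, (∫⁻ q, k p q * f q ∂μ) ^ 2 ∂μ ≤ ∫⁻ p, ∫⁻ q, k p q * f q ^ 2 ∂μ ∂μ :=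
        lintegral_mono fun p => (sq_lintegral_mul_le
          (hk.measurable_coe_apply p).aemeasurable hf.aemeasurable).trans
          (mul_le_of_le_one_left' (hk.lintegral_le_one p))
  _ ≤ ∫⁻ q, f q ^ 2 ∂μ := hk.lintegral_lintegral_mul_le (hf.pow_const 2)

theorem lintegral_enorm_kernelIntegral_sq_le (F : Lp 𝕜 2 μ) :
    ∫⁻ p, ‖kernelIntegral μ k F p‖ₑ ^ 2 ∂μ ≤ ∫⁻ q, ‖F q‖ₑ ^ 2 ∂μ :=
  calc ∫⁻ p, ‖kernelIntegral μ k F p‖ₑ ^ 2 ∂μ ≤ ∫⁻ p, (∫⁻ q, k p q * ‖F q‖ₑ ∂μ) ^ 2 ∂μ := by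
        refine lintegral_mono fun p => pow_le_pow_left₀ zero_le ?_ 2
        refine (enorm_integral_le_lintegral_enorm _).trans_eq ?_
        simp only [enorm_mul, RCLike.enorm_ofReal_nnreal]
  _ ≤ ∫⁻ q, ‖F q‖ₑ ^ 2 ∂μ := hk.lintegral_sq_lintegral_mul_le (Lp.stronglyMeasurable F).enorm

theorem ae_integrable (F : Lp 𝕜 2 μ) :
    ∀ᵐ p ∂μ, Integrable (fun q => ((k p q : ℝ) : 𝕜) * F q) μ := by
  have hF : Measurable fun q => ‖F q‖ₑ := (Lp.stronglyMeasurable F).enorm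
  have hmeas : Measurable fun p => (∫⁻ q, k p q * ‖F q‖ₑ ∂μ) ^ 2 :=
    (hk.measurable_coe.mul (hF.comp measurable_snd)).lintegral_prod_right'.pow_const 2
  filter_upwards [ae_lt_top hmeas ((hk.lintegral_sq_lintegral_mul_le hF).trans_lt
    (Lp.lintegral_enorm_sq_lt_top F)).ne] with p hp
  refine ⟨(hk.stronglyMeasurable_mul (Lp.stronglyMeasurable F)).comp_measurable
    measurable_prodMk_left |>.aestronglyMeasurable, ?_⟩
  simpa [HasFiniteIntegral, enorm_mul, RCLike.enorm_ofReal_nnreal] using hp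

theorem memLp_kernelIntegral (F : Lp 𝕜 2 μ) : MemLp (kernelIntegral μ k F) 2 μ :=
  ⟨(hk.stronglyMeasurable_mul (Lp.stronglyMeasurable F)).integral_prod_right'.aestronglyMeasurable,
    (eLpNorm_two_le_of_lintegral_le (hk.lintegral_enorm_kernelIntegral_sq_le F)).trans_lt
      (Lp.eLpNorm_lt_top F)⟩

theorem kernelIntegral_add_ae (F G : Lp 𝕜 2 μ) :
    kernelIntegral μ k ⇑(F + G) =ᵐ[μ] kernelIntegral μ k F + kernelIntegral μ k G := by
  filter_upwards [hk.ae_integrable F, hk.ae_integrable G] with p hF hG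
  rw [Pi.add_apply, kernelIntegral, kernelIntegral, kernelIntegral, ← integral_add hF hG]
  refine integral_congr_ae ?_
  filter_upwards [Lp.coeFn_add F G] with q hq
  rw [hq, Pi.add_apply, mul_add]

def kernelOp : Lp 𝕜 2 μ →L[𝕜] Lp 𝕜 2 μ :=
  LinearMap.mkContinuous
    { toFun := fun F => (hk.memLp_kernelIntegral F).toLp
      map_add' := fun F G => by
        rw [← MemLp.toLp_add]
        exact MemLp.toLp_congr _ _ (hk.kernelIntegral_add_ae F G)
      map_smul' := fun c F => by
        rw [RingHom.id_apply, ← MemLp.toLp_const_smul]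
        exact MemLp.toLp_congr _ _ (kernelIntegral_smul_ae c F) }
    1 fun F => by
      rw [one_mul, LinearMap.coe_mk, AddHom.coe_mk, Lp.norm_toLp, Lp.norm_def]
      exact ENNReal.toReal_mono (Lp.eLpNorm_ne_top F)
        (eLpNorm_two_le_of_lintegral_le (hk.lintegral_enorm_kernelIntegral_sq_le F))

theorem coeFn_kernelOp (F : Lp 𝕜 2 μ) : hk.kernelOp F =ᵐ[μ] kernelIntegral μ k F :=
  MemLp.coeFn_toLp (hk.memLp_kernelIntegral F)

theorem integrable_mul_conj_mul (F G : Lp 𝕜 2 μ) :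
    Integrable (fun z : α × α => ((k z.1 z.2 : ℝ) : 𝕜) * conj (F z.2) * G z.1) (μ.prod μ) := by
  have hF : Measurable fun q => ‖F q‖ₑ := (Lp.stronglyMeasurable F).enorm
  have hmeas : StronglyMeasurable
      fun z : α × α => ((k z.1 z.2 : ℝ) : 𝕜) * conj (F z.2) * G z.1 :=
    (hk.stronglyMeasurable_mul (RCLike.continuous_conj.comp_stronglyMeasurable
      (Lp.stronglyMeasurable F))).mul ((Lp.stronglyMeasurable G).comp_measurable measurable_fst)
  have hkF : Measurable fun z : α × α => (k z.1 z.2 : ℝ≥0∞) * ‖F z.2‖ₑ ^ 2 :=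
    hk.measurable_coe.mul ((hF.pow_const 2).comp measurable_snd)
  refine ⟨hmeas.aestronglyMeasurable, ?_⟩
  rw [HasFiniteIntegral, lintegral_prod _ hmeas.enorm.aemeasurable]
  calc ∫⁻ p, ∫⁻ q, ‖((k p q : ℝ) : 𝕜) * conj (F q) * G p‖ₑ ∂μ ∂μ
      ≤ ∫⁻ p, ∫⁻ q, (k p q * ‖F q‖ₑ ^ 2 + ‖G p‖ₑ ^ 2 * k p q) ∂μ ∂μ := by
        refine lintegral_mono fun p => lintegral_mono fun q => ?_
        simp only [enorm_mul, RCLike.enorm_ofReal_nnreal, RCLike.enorm_conj, mul_assoc]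
        calc (k p q : ℝ≥0∞) * (‖F q‖ₑ * ‖G p‖ₑ) ≤ k p q * (‖F q‖ₑ ^ 2 + ‖G p‖ₑ ^ 2) := by
              gcongr; exact ENNReal.mul_le_sq_add_sq _ _
        _ = _ := by ring
  _ = ∫⁻ p, ∫⁻ q, k p q * ‖F q‖ₑ ^ 2 ∂μ ∂μ
        + ∫⁻ p, ‖G p‖ₑ ^ 2 * ∫⁻ q, (k p q : ℝ≥0∞) ∂μ ∂μ := by
        rw [← lintegral_add_left hkF.lintegral_prod_right']
        refine lintegral_congr fun p => ?_
        have hkFp : Measurable fun q => (k p q : ℝ≥0∞) * ‖F q‖ₑ ^ 2 :=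
          hkF.comp measurable_prodMk_left
        rw [lintegral_add_left hkFp, lintegral_const_mul _ (hk.measurable_coe_apply p)]
  _ ≤ ∫⁻ q, ‖F q‖ₑ ^ 2 ∂μ + ∫⁻ p, ‖G p‖ₑ ^ 2 ∂μ :=
        add_le_add (hk.lintegral_lintegral_mul_le (hF.pow_const 2))
          (lintegral_mono fun p => mul_le_of_le_one_right' (hk.lintegral_le_one p))
  _ < ∞ := ENNReal.add_lt_top.mpr ⟨Lp.lintegral_enorm_sq_lt_top F, Lp.lintegral_enorm_sq_lt_top G⟩

theorem isSelfAdjoint_kernelOp : IsSelfAdjoint (hk.kernelOp (𝕜 := 𝕜)) := by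
  refine LinearMap.IsSymmetric.isSelfAdjoint fun F G => ?_
  simp only [ContinuousLinearMap.coe_coe, L2.inner_def, RCLike.inner_apply]
  calc ∫ p, G p * conj (hk.kernelOp F p) ∂μ
      = ∫ p, ∫ q, ((k p q : ℝ) : 𝕜) * conj (F q) * G p ∂μ ∂μ := by
        refine integral_congr_ae ?_
        filter_upwards [hk.coeFn_kernelOp F] with p hp
        rw [hp, kernelIntegral, ← integral_conj, ← integral_const_mul]
        simp only [map_mul, RCLike.conj_ofReal]
        ring_nf
  _ = ∫ q, ∫ p, ((k p q : ℝ) : 𝕜) * conj (F q) * G p ∂μ ∂μ :=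
        integral_integral_swap (hk.integrable_mul_conj_mul F G)
  _ = ∫ q, hk.kernelOp G q * conj (F q) ∂μ := by
        refine integral_congr_ae ?_
        filter_upwards [hk.coeFn_kernelOp G] with q hq
        rw [hq, kernelIntegral, ← integral_mul_const]
        simp only [hk.symm _ q]
        congr 1 with p
        ring

end IsSymmSubMarkovKernel

end SymmetricKernel

namespace Network

open scoped Classical

section

variable {V : Type} (N : Network V)

theorem c_nonneg (x y : V) : 0 ≤ N.c x y := by
  by_cases h : N.adj x y
  · exact (N.c_pos x y h).le
  · exact (N.c_eq_zero x y h).ge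

theorem m0_nonneg (x : V) : 0 ≤ N.m0 x := tsum_nonneg (N.c_nonneg x)

theorem eFlip_involutive : Function.Involutive (eFlip (V := V)) := fun _ => by
  simp [eFlip]

def avgPrimitive (f : V → V → ℝ → ℂ) (x : V) (t : ℝ) : ℂ :=
  (N.m0 x : ℂ)⁻¹ * (∑' u, (N.c x u : ℂ) * ∫ s in (0:ℝ)..t, f x u s)

theorem avgFun_eq (f : V → V → ℝ → ℂ) (x y : V) (t : ℝ) :
    N.avgFun f x y t = N.avgPrimitive f x (1 - t) + N.avgPrimitive f y t :=
  rfl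

/-- The factor `2` compensates for the weight `c/2` that `edgeMeasure` gives to each of the two
orientations of an edge. -/
def tailKernel (p q : (V × V) × ℝ) : ℝ≥0 :=
  if q.1.1 = p.1.1 ∧ p.2 + q.2 < 1 then 2 / (N.m0 p.1.1).toNNReal else 0

theorem tailKernel_le (p q : (V × V) × ℝ) :
    N.tailKernel p q ≤ if q.1.1 = p.1.1 then 2 / (N.m0 p.1.1).toNNReal else 0 := by
  unfold tailKernel
  split_ifs <;> simp_all

theorem tailKernel_symm (p q : (V × V) × ℝ) : N.tailKernel p q = N.tailKernel q p := by
  unfold tailKernel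
  by_cases h : q.1.1 = p.1.1
  · simp only [h, true_and, add_comm p.2]
  · simp [h, Ne.symm h]

theorem tailKernel_mul_eq_indicator (f : (V × V) × ℝ → ℂ) (x y u : V) (t s : ℝ) :
    ((N.tailKernel ((x, y), t) ((x, u), s) : ℝ) : ℂ) * f ((x, u), s)
      = (Iio (1 - t)).indicator (fun s => (2 / N.m0 x : ℂ) * f ((x, u), s)) s := by
  by_cases hs : s < 1 - t
  · rw [indicator_of_mem (mem_Iio.mpr hs), tailKernel, if_pos ⟨rfl, by linarith⟩,
      NNReal.coe_div, Real.coe_toNNReal _ (N.m0_nonneg x)]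
    push_cast
    rfl
  · rw [indicator_of_notMem (mt mem_Iio.mp hs), tailKernel, if_neg fun h => hs (by linarith [h.2])]
    simp

end

variable {V : Type} [Countable V] [MeasurableSpace V] [DiscreteMeasurableSpace V] (N : Network V)

theorem lintegral_edgeMeasure (φ : (V × V) × ℝ → ℝ≥0∞) :
    ∫⁻ p, φ p ∂N.edgeMeasure
      = ∑' e : V × V, ENNReal.ofReal (N.c e.1 e.2 / 2) * ∫⁻ t in Ioo (0:ℝ) 1, φ (e, t) := by
  simp only [edgeMeasure, lintegral_sum_measure,
    (measurableEmbedding_prodMk_left _).lintegral_map, lintegral_smul_measure, smul_eq_mul]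

theorem integral_edgeMeasure {E : Type*} [NormedAddCommGroup E] [NormedSpace ℝ E]
    {φ : (V × V) × ℝ → E} (hφ : Integrable φ N.edgeMeasure) :
    ∫ p, φ p ∂N.edgeMeasure = ∑' e : V × V, (N.c e.1 e.2 / 2) • ∫ t in Ioo (0:ℝ) 1, φ (e, t) := by
  rw [edgeMeasure, integral_sum_measure hφ]
  refine tsum_congr fun e => ?_
  rw [(measurableEmbedding_prodMk_left _).integral_map, integral_smul_measure,
    ENNReal.toReal_ofReal (div_nonneg (N.c_nonneg _ _) zero_le_two)]

theorem ae_snd_mem_Ioo : ∀ᵐ p ∂N.edgeMeasure, p.2 ∈ Ioo (0:ℝ) 1 := by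
  refine Measure.ae_sum_iff.mpr fun e => ?_
  rw [(measurableEmbedding_prodMk_left e).ae_map_iff]
  exact Measure.ae_smul_measure (ae_restrict_mem measurableSet_Ioo) _

instance : SFinite N.edgeMeasure := by
  unfold edgeMeasure; infer_instance

theorem lintegral_tailKernel_le_one (p : (V × V) × ℝ) :
    ∫⁻ q, (N.tailKernel p q : ℝ≥0∞) ∂N.edgeMeasure ≤ 1 := by
  obtain ⟨⟨x, y⟩, t⟩ := p
  set K : ℝ≥0 := 2 / (N.m0 x).toNNReal
  calc ∫⁻ q, (N.tailKernel ((x, y), t) q : ℝ≥0∞) ∂N.edgeMeasure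
      ≤ ∑' e : V × V, if e.1 = x then ENNReal.ofReal (N.c x e.2 / 2) * K else 0 := by
        rw [lintegral_edgeMeasure]
        refine ENNReal.tsum_le_tsum fun e => ?_
        have hK : ∀ s, (N.tailKernel ((x, y), t) (e, s) : ℝ≥0∞) ≤ if e.1 = x then K else 0 :=
          fun s => by exact_mod_cast N.tailKernel_le _ _
        split_ifs at hK ⊢ with he
        · rw [he]
          gcongr
          calc ∫⁻ s in Ioo (0:ℝ) 1, (N.tailKernel ((x, y), t) (e, s) : ℝ≥0∞)
              ≤ ∫⁻ _ in Ioo (0:ℝ) 1, (K : ℝ≥0∞) := lintegral_mono hK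
          _ = K := by simp
        · simp [nonpos_iff_eq_zero.mp (hK _)]
  _ = ENNReal.ofReal (N.m0 x / 2) * K := by
        rw [tsum_ite_fst_eq x fun u => ENNReal.ofReal (N.c x u / 2) * K, ENNReal.tsum_mul_right,
          m0, ← tsum_div_const,
          ENNReal.ofReal_tsum_of_nonneg (fun u => div_nonneg (N.c_nonneg x u) zero_le_two)
            ((N.c_summable x).div_const 2)]
  _ ≤ 1 := by
        rw [ENNReal.ofReal, ← ENNReal.coe_mul, ENNReal.coe_le_one_iff,
          Real.toNNReal_div' zero_le_two]
        rcases eq_or_ne (N.m0 x).toNNReal 0 with h | h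
        · simp [K, h]
        · simp [K, field]

theorem measurable_tailKernel : Measurable (Function.uncurry N.tailKernel) := by
  refine Measurable.ite ?_ ?_ measurable_const
  · exact (measurableSet_eq_fun measurable_snd.fst.fst measurable_fst.fst.fst).inter
      (measurableSet_lt (measurable_fst.snd.add measurable_snd.snd) measurable_const)
  · exact (measurable_of_countable fun x : V => 2 / (N.m0 x).toNNReal).comp measurable_fst.fst.fst

theorem isSymmSubMarkovKernel_tailKernel : IsSymmSubMarkovKernel N.edgeMeasure N.tailKernel :=
  ⟨N.measurable_tailKernel, N.tailKernel_symm, N.lintegral_tailKernel_le_one⟩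

theorem kernelIntegral_tailKernel {f : (V × V) × ℝ → ℂ} {x y : V} {t : ℝ} (ht : t ∈ Ioo (0:ℝ) 1)
    (hf : Integrable (fun q => ((N.tailKernel ((x, y), t) q : ℝ) : ℂ) * f q) N.edgeMeasure) :
    kernelIntegral N.edgeMeasure N.tailKernel f ((x, y), t)
      = N.avgPrimitive (fun x u s => f ((x, u), s)) x (1 - t) := by
  refine (N.integral_edgeMeasure hf).trans ?_
  rw [avgPrimitive, ← tsum_mul_left, ← tsum_ite_fst_eq x fun u =>
    (N.m0 x : ℂ)⁻¹ * ((N.c x u : ℂ) * ∫ s in (0:ℝ)..(1 - t), f ((x, u), s))]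
  refine tsum_congr fun e => ?_
  obtain ⟨x', u⟩ := e
  split_ifs with hx
  · subst hx
    have hset : Ioo (0:ℝ) 1 ∩ Iio (1 - t) = Ioo 0 (1 - t) := by
      rw [Ioo_inter_Iio, min_eq_right (by linarith [ht.1])]
    simp only [N.tailKernel_mul_eq_indicator f]
    rw [setIntegral_indicator measurableSet_Iio, hset, integral_const_mul,
      intervalIntegral.integral_of_le (by linarith [ht.2]), integral_Ioc_eq_integral_Ioo,
      Complex.real_smul]
    push_cast
    ring
  · have hzero : ∀ s, N.tailKernel ((x, y), t) ((x', u), s) = 0 := fun s => by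
      simp [tailKernel, hx]
    simp [hzero]

def tailOp : Lp ℂ 2 N.edgeMeasure →L[ℂ] Lp ℂ 2 N.edgeMeasure :=
  N.isSymmSubMarkovKernel_tailKernel.kernelOp

theorem isSelfAdjoint_tailOp : IsSelfAdjoint N.tailOp :=
  N.isSymmSubMarkovKernel_tailKernel.isSelfAdjoint_kernelOp

theorem coeFn_tailOp (F : Lp ℂ 2 N.edgeMeasure) :
    N.tailOp F =ᵐ[N.edgeMeasure] fun p => N.avgPrimitive (N.edgeFun F) p.1.1 (1 - p.2) := by
  filter_upwards [N.isSymmSubMarkovKernel_tailKernel.coeFn_kernelOp F,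
    N.isSymmSubMarkovKernel_tailKernel.ae_integrable F, N.ae_snd_mem_Ioo]
    with ⟨⟨x, y⟩, t⟩ hF hint ht
  exact hF.trans (N.kernelIntegral_tailKernel ht hint)

theorem coeFn_flipOp (F : Lp ℂ 2 N.edgeMeasure) :
    N.flipOp F =ᵐ[N.edgeMeasure] F ∘ eFlip :=
  Lp.coeFn_compMeasurePreserving F N.measurePreserving_eFlip

theorem flipOp_flipOp (F : Lp ℂ 2 N.edgeMeasure) : N.flipOp (N.flipOp F) = F := by
  refine Lp.ext ((N.coeFn_flipOp _).trans ?_)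
  filter_upwards [N.measurePreserving_eFlip.quasiMeasurePreserving.ae_eq_comp
    (N.coeFn_flipOp F)] with p hp
  rw [hp, Function.comp_apply, Function.comp_apply, eFlip_involutive]

theorem isSelfAdjoint_flipOp : IsSelfAdjoint N.flipOp := by
  refine LinearMap.IsSymmetric.isSelfAdjoint fun F G => ?_
  conv_lhs => rw [← N.flipOp_flipOp G]
  exact (Lp.compMeasurePreservingₗᵢ ℂ eFlip N.measurePreserving_eFlip).inner_map_map F _

theorem mem_L2X_iff {F : Lp ℂ 2 N.edgeMeasure} : F ∈ N.L2X ↔ N.flipOp F = F := by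
  simp [L2X, sub_eq_zero]

def avgOpLp : Lp ℂ 2 N.edgeMeasure →L[ℂ] Lp ℂ 2 N.edgeMeasure :=
  N.tailOp + N.flipOp * N.tailOp * N.flipOp

theorem isSelfAdjoint_avgOpLp : IsSelfAdjoint N.avgOpLp := by
  have h := N.isSelfAdjoint_tailOp.conjugate N.flipOp
  rw [N.isSelfAdjoint_flipOp.star_eq] at h
  exact N.isSelfAdjoint_tailOp.add h

theorem avgOpLp_apply_of_mem {F : Lp ℂ 2 N.edgeMeasure} (hF : F ∈ N.L2X) :
    N.avgOpLp F = N.tailOp F + N.flipOp (N.tailOp F) := by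
  rw [N.mem_L2X_iff] at hF
  simp [avgOpLp, hF]

theorem avgOpLp_mem {F : Lp ℂ 2 N.edgeMeasure} (hF : F ∈ N.L2X) : N.avgOpLp F ∈ N.L2X := by
  rw [N.mem_L2X_iff, N.avgOpLp_apply_of_mem hF, map_add, N.flipOp_flipOp, add_comm]

def avgOp : N.L2X →L[ℂ] N.L2X :=
  N.avgOpLp.restrict fun _ => N.avgOpLp_mem

theorem coeFn_avgOp (F : N.L2X) :
    (N.avgOp F : Lp ℂ 2 N.edgeMeasure) =ᵐ[N.edgeMeasure]
      fun p => N.avgFun (N.edgeFun F) p.1.1 p.1.2 p.2 := by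
  rw [avgOp, ContinuousLinearMap.coe_restrict_apply, N.avgOpLp_apply_of_mem F.2]
  filter_upwards [Lp.coeFn_add (N.tailOp F) (N.flipOp (N.tailOp F)), N.coeFn_tailOp F,
    (N.coeFn_flipOp _).trans (N.measurePreserving_eFlip.quasiMeasurePreserving.ae_eq_comp
      (N.coeFn_tailOp F))] with ⟨⟨x, y⟩, t⟩ hadd h1 h2
  rw [hadd, Pi.add_apply, h1, h2, avgFun_eq]
  simp [eFlip]

end Network

/-- The averaging operator
`(AF)(xy,t) = (1/m⁰(x)) ∑_{u∼x} c(xu) ∫₀^{1-t} F(xu,s) ds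
            + (1/m⁰(y)) ∑_{v∼y} c(yv) ∫₀^{t} F(yv,s) ds`
is a bounded self-adjoint operator on the Hilbert space `L²(X¹,m¹)`. -/
theorem averaging_operator_bounded_selfAdjoint
    {V : Type} [Countable V] [MeasurableSpace V] [DiscreteMeasurableSpace V]
    (N : Network V) :
    ∃ A : N.L2X →L[ℂ] N.L2X, IsSelfAdjoint A ∧
      ∀ F : N.L2X,
        ⇑(A F : Lp ℂ 2 N.edgeMeasure) =ᵐ[N.edgeMeasure]
          fun p => N.avgFun (N.edgeFun (F : Lp ℂ 2 N.edgeMeasure)) p.1.1 p.1.2 p.2 :=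
  ⟨N.avgOp, N.isSelfAdjoint_avgOpLp.restrict _, N.coeFn_avgOp⟩
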